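/- With the same setup (equal path loss exponent α, independent Rayleigh nearest distances with intensities λ_1, λ_2, powers P_1 > P_2, bias B > 1), the probability that a user is an offloaded user, i.e., P(P_2 Z_2^{−α} ≤ P_1 Z_1^{−α} < B P_2 Z_2^{−α}), equals λ_2 (B P_2/P_1)^{2/α} / (λ_1 + λ_2 (B P_2/P_1)^{2/α}) − λ_2 (P_2/P_1)^{2/α} / (λ_1 + λ_2 (P_2/P_1)^{2/α}). -/

import Mathlib

open MeasureTheory ProbabilityTheory Real Set

/-! With `c = (P₂/P₁)^{1/α}` and `c' = (B P₂/P₁)^{1/α}`, on `Z₁, Z₂ > 0` the user is offloaded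
exactly when `c Z₁ ≤ Z₂ < c' Z₁`. By independence, `P(t Z₁ ≤ Z₂) = E[exp(-πλ₂ t² Z₁²)]`, and as
`Z₁²` is exponential with rate `πλ₁` this equals `λ₁ / (λ₁ + λ₂ t²)`; here it is computed by the
layer-cake formula from `P(exp(-a Z₁²) > s) = 1 - s^{πλ₁/a}` on `0 < s < 1`. -/

/-- For the distance to the nearest point of a planar Poisson process of intensity `λ`, `c = πλ`. -/
def HasRayleighTail (ν : Measure ℝ) (c : ℝ) : Prop :=
  ∀ z ≥ (0:ℝ), ν (Ioi z) = ENNReal.ofReal (exp (-(c * z ^ 2)))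

theorem lintegral_Ioi_ofReal_one_sub_rpow {r : ℝ} (hr : 0 ≤ r) :
    ∫⁻ s in Ioi (0:ℝ), ENNReal.ofReal (1 - s ^ r) = ENNReal.ofReal (r / (r + 1)) := by
  have hzero : ∀ s ∈ Ioi (1:ℝ), ENNReal.ofReal (1 - s ^ r) = 0 := fun s hs =>
    ENNReal.ofReal_eq_zero.mpr (sub_nonpos.mpr (one_le_rpow (le_of_lt hs) hr))
  have hint : IntervalIntegrable (fun s : ℝ => 1 - s ^ r) volume 0 1 :=
    intervalIntegrable_const.sub (intervalIntegral.intervalIntegrable_rpow' (by linarith))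
  have hnn : ∀ s ∈ Ioc (0:ℝ) 1, 0 ≤ 1 - s ^ r := fun s hs =>
    sub_nonneg.mpr (rpow_le_one hs.1.le hs.2 hr)
  rw [← Ioc_union_Ioi_eq_Ioi zero_le_one, lintegral_union measurableSet_Ioi Ioc_disjoint_Ioi_same,
    setLIntegral_congr_fun measurableSet_Ioi hzero, lintegral_zero, add_zero,
    ← ofReal_integral_eq_lintegral_ofReal
      ((intervalIntegrable_iff_integrableOn_Ioc_of_le zero_le_one).mp hint)
      ((ae_restrict_iff' measurableSet_Ioc).mpr (Filter.Eventually.of_forall hnn)),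
    ← intervalIntegral.integral_of_le zero_le_one,
    intervalIntegral.integral_sub intervalIntegrable_const
      (intervalIntegral.intervalIntegrable_rpow' (by linarith)),
    intervalIntegral.integral_const, integral_rpow (Or.inl (by linarith)), one_rpow,
    zero_rpow (by positivity)]
  congr 1
  field_simp
  ring

theorem hasRayleighTail_map {Ω : Type*} [MeasurableSpace Ω] {μ : Measure Ω} {Z : Ω → ℝ}
    (hZ : Measurable Z) {c : ℝ}
    (htail : ∀ z ≥ (0:ℝ), μ {ω | Z ω > z} = ENNReal.ofReal (exp (-(c * z ^ 2)))) :
    HasRayleighTail (μ.map Z) c := fun z hz =>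
  (Measure.map_apply hZ measurableSet_Ioi).trans (htail z hz)

namespace HasRayleighTail

variable {ν : Measure ℝ} {c : ℝ}

theorem measure_Ici (hν : HasRayleighTail ν c) {z : ℝ} (hz : 0 < z) :
    ν (Ici z) = ENNReal.ofReal (exp (-(c * z ^ 2))) := by
  refine le_antisymm ?_ (hν z hz.le ▸ measure_mono Ioi_subset_Ici_self)
  have : (nhdsWithin z (Ico 0 z)).NeBot := (isLUB_Ico hz).nhdsWithin_neBot (nonempty_Ico.mpr hz)
  have hcont : Continuous fun y : ℝ => ENNReal.ofReal (exp (-(c * y ^ 2))) :=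
    ENNReal.continuous_ofReal.comp (by fun_prop)
  refine ge_of_tendsto ((hcont.tendsto z).mono_left (nhdsWithin_le_nhds (s := Ico 0 z))) ?_
  filter_upwards [self_mem_nhdsWithin] with y hy
  exact hν y hy.1 ▸ measure_mono (Ici_subset_Ioi.mpr hy.2)

theorem ae_pos [IsProbabilityMeasure ν] (hν : HasRayleighTail ν c) : ∀ᵐ x ∂ν, 0 < x :=
  (ae_mem_iff_measure_eq measurableSet_Ioi.nullMeasurableSet).mpr (by simp [hν 0 le_rfl])

theorem measure_lt_exp_neg_mul_sq [IsProbabilityMeasure ν] (hν : HasRayleighTail ν c)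
    (hc : 0 ≤ c) {a s : ℝ} (ha : 0 < a) (hs : 0 < s) :
    ν {x | s < exp (-(a * x ^ 2))} = ENNReal.ofReal (1 - s ^ (c / a)) := by
  rcases lt_or_ge s 1 with hs1 | hs1
  · have hq : 0 < -log s / a := div_pos (neg_pos.mpr (log_neg hs hs1)) ha
    set r := √(-log s / a)
    have hr : 0 < r := sqrt_pos.mpr hq
    have hlevel : {x | s < exp (-(a * x ^ 2))} =ᵐ[ν] ((Ici r)ᶜ : Set ℝ) := by
      rw [Filter.eventuallyEq_set]
      filter_upwards [hν.ae_pos] with x hx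
      rw [mem_compl_iff, mem_Ici, not_le, ← log_lt_iff_lt_exp hs, lt_sqrt hx.le,
        lt_div_iff₀ ha]
      constructor <;> intro h <;> linarith
    have hpow : s ^ (c / a) = exp (-(c * r ^ 2)) := by
      rw [sq_sqrt hq.le, rpow_def_of_pos hs]
      congr 1
      field_simp
    rw [measure_congr hlevel, prob_compl_eq_one_sub measurableSet_Ici, hν.measure_Ici hr, hpow,
      ENNReal.ofReal_sub _ (exp_pos _).le, ENNReal.ofReal_one]
  · have hempty : {x | s < exp (-(a * x ^ 2))} = ∅ := by
      ext x
      simp only [mem_ofPred_eq, mem_empty_iff_false, iff_false, not_lt]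
      exact (exp_le_one_iff.mpr (by nlinarith)).trans hs1
    rw [hempty, measure_empty, eq_comm, ENNReal.ofReal_eq_zero, sub_nonpos]
    exact one_le_rpow hs1 (div_nonneg hc ha.le)

theorem lintegral_exp_neg_mul_sq [IsProbabilityMeasure ν] (hν : HasRayleighTail ν c)
    (hc : 0 ≤ c) {a : ℝ} (ha : 0 < a) :
    ∫⁻ x, ENNReal.ofReal (exp (-(a * x ^ 2))) ∂ν = ENNReal.ofReal (c / (c + a)) := by
  rw [lintegral_eq_lintegral_meas_lt ν (Filter.Eventually.of_forall fun x => (exp_pos _).le)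
      (by fun_prop),
    setLIntegral_congr_fun measurableSet_Ioi
      fun s hs => hν.measure_lt_exp_neg_mul_sq hc ha hs,
    lintegral_Ioi_ofReal_one_sub_rpow (div_nonneg hc ha.le)]
  congr 1
  field_simp

theorem prod_measure_mul_le [IsProbabilityMeasure ν] (hν : HasRayleighTail ν c) (hc : 0 ≤ c)
    {ν' : Measure ℝ} [IsProbabilityMeasure ν'] {c' : ℝ} (hν' : HasRayleighTail ν' c')
    (hc' : 0 < c') {t : ℝ} (ht : 0 < t) :
    ν.prod ν' {p | t * p.1 ≤ p.2} = ENNReal.ofReal (c / (c + c' * t ^ 2)) := by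
  rw [Measure.prod_apply (measurableSet_le (by fun_prop) (by fun_prop)),
    ← hν.lintegral_exp_neg_mul_sq hc (by positivity : 0 < c' * t ^ 2)]
  refine lintegral_congr_ae ?_
  filter_upwards [hν.ae_pos] with x hx
  change ν' (Ici (t * x)) = _
  rw [hν'.measure_Ici (by positivity)]
  ring_nf

theorem prod_measure_mul_le_and_lt_mul [IsProbabilityMeasure ν] (hν : HasRayleighTail ν c)
    (hc : 0 ≤ c) {ν' : Measure ℝ} [IsProbabilityMeasure ν'] {c' : ℝ}
    (hν' : HasRayleighTail ν' c') (hc' : 0 < c') {s t : ℝ} (hs : 0 < s) (hst : s ≤ t) :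
    ν.prod ν' {p | s * p.1 ≤ p.2 ∧ p.2 < t * p.1} =
      ENNReal.ofReal (c / (c + c' * s ^ 2) - c / (c + c' * t ^ 2)) := by
  have hsub : {p : ℝ × ℝ | t * p.1 ≤ p.2} ≤ᵐ[ν.prod ν'] {p | s * p.1 ≤ p.2} := by
    filter_upwards [Measure.quasiMeasurePreserving_fst.ae hν.ae_pos] with p hp
    exact fun h : t * p.1 ≤ p.2 => (mul_le_mul_of_nonneg_right hst hp.le).trans h
  have hset : {p : ℝ × ℝ | s * p.1 ≤ p.2 ∧ p.2 < t * p.1} =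
      {p | s * p.1 ≤ p.2} \ {p | t * p.1 ≤ p.2} := by
    ext p
    simp [not_le]
  rw [hset, measure_sdiff' _ (measurableSet_le (by fun_prop) (by fun_prop)).nullMeasurableSet
      (measure_ne_top _ _), measure_congr (union_ae_eq_left_iff_ae_subset.mpr hsub),
    hν.prod_measure_mul_le hc hν' hc' hs, hν.prod_measure_mul_le hc hν' hc' (hs.trans_le hst),
    ENNReal.ofReal_sub _ (by positivity)]

end HasRayleighTail

theorem mul_rpow_neg_le_mul_rpow_neg_iff {z₁ z₂ P Q α : ℝ} (hz₁ : 0 < z₁) (hz₂ : 0 < z₂)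
    (hP : 0 < P) (hQ : 0 ≤ Q) (hα : 0 < α) :
    Q * z₂ ^ (-α) ≤ P * z₁ ^ (-α) ↔ (Q / P) ^ α⁻¹ * z₁ ≤ z₂ := by
  rw [rpow_neg hz₁.le, rpow_neg hz₂.le, ← div_eq_mul_inv, ← div_eq_mul_inv,
    div_le_div_iff₀ (rpow_pos_of_pos hz₂ α) (rpow_pos_of_pos hz₁ α),
    ← rpow_le_rpow_iff (by positivity : (0:ℝ) ≤ (Q / P) ^ α⁻¹ * z₁) hz₂.le hα,
    mul_rpow (by positivity) hz₁.le, ← rpow_mul (by positivity), inv_mul_cancel₀ hα.ne',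
    rpow_one, div_mul_eq_mul_div, div_le_iff₀ hP, mul_comm (z₂ ^ α) P]

theorem offloaded_iff {z₁ z₂ P₁ P₂ B α : ℝ} (hz₁ : 0 < z₁) (hz₂ : 0 < z₂) (hP₁ : 0 < P₁)
    (hP₂ : 0 ≤ P₂) (hB : 0 ≤ B) (hα : 0 < α) :
    (P₂ * z₂ ^ (-α) ≤ P₁ * z₁ ^ (-α) ∧ P₁ * z₁ ^ (-α) < B * P₂ * z₂ ^ (-α)) ↔
      (P₂ / P₁) ^ α⁻¹ * z₁ ≤ z₂ ∧ z₂ < (B * P₂ / P₁) ^ α⁻¹ * z₁ := by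
  rw [← not_le, ← not_le, mul_rpow_neg_le_mul_rpow_neg_iff hz₁ hz₂ hP₁ hP₂ hα,
    mul_rpow_neg_le_mul_rpow_neg_iff hz₁ hz₂ hP₁ (by positivity) hα]

/-- **Offloaded-user probability.**
With independent Rayleigh nearest distances (intensities `λ₁, λ₂`), equal path loss
exponent `α > 2`, powers `P₁ > P₂ > 0` and bias `B > 1`, the probability that the
typical user is offloaded, i.e. `P(P₂ Z₂^{−α} ≤ P₁ Z₁^{−α} < B P₂ Z₂^{−α})`, equals
`λ₂ (B P₂/P₁)^{2/α} / (λ₁ + λ₂ (B P₂/P₁)^{2/α}) − λ₂ (P₂/P₁)^{2/α} / (λ₁ + λ₂ (P₂/P₁)^{2/α})`. -/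
theorem offloaded_user_probability
    {Ω : Type*} [MeasurableSpace Ω] (μ : Measure Ω) [IsProbabilityMeasure μ]
    (lam1 lam2 : ℝ) (hlam1 : 0 < lam1) (hlam2 : 0 < lam2)
    (α : ℝ) (hα : 2 < α) (P1 P2 : ℝ) (hP2 : 0 < P2) (hP12 : P2 < P1)
    (B : ℝ) (hB : 1 < B)
    (Z1 Z2 : Ω → ℝ)
    (hZ1 : ∀ z ≥ (0:ℝ), μ {ω | Z1 ω > z} = ENNReal.ofReal (Real.exp (-(π * lam1 * z ^ 2))))
    (hZ2 : ∀ z ≥ (0:ℝ), μ {ω | Z2 ω > z} = ENNReal.ofReal (Real.exp (-(π * lam2 * z ^ 2))))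
    (hindep : IndepFun Z1 Z2 μ)
    (hm1 : Measurable Z1) (hm2 : Measurable Z2) :
    μ {ω | P2 * (Z2 ω) ^ (-α) ≤ P1 * (Z1 ω) ^ (-α) ∧
           P1 * (Z1 ω) ^ (-α) < B * P2 * (Z2 ω) ^ (-α)} =
      ENNReal.ofReal
        (lam2 * (B * P2 / P1) ^ (2 / α) / (lam1 + lam2 * (B * P2 / P1) ^ (2 / α))
          - lam2 * (P2 / P1) ^ (2 / α) / (lam1 + lam2 * (P2 / P1) ^ (2 / α))) := by
  have hP1 : 0 < P1 := hP2.trans hP12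
  have hα0 : 0 < α := by linarith
  have hν₁ := hasRayleighTail_map hm1 hZ1
  have hν₂ := hasRayleighTail_map hm2 hZ2
  have := Measure.isProbabilityMeasure_map (μ := μ) hm1.aemeasurable
  have := Measure.isProbabilityMeasure_map (μ := μ) hm2.aemeasurable
  set c := (P2 / P1) ^ α⁻¹
  set c' := (B * P2 / P1) ^ α⁻¹
  have hcc' : c ≤ c' := rpow_le_rpow (by positivity)
    (div_le_div_of_nonneg_right (le_mul_of_one_le_left hP2.le hB.le) hP1.le) (by positivity)
  have hevent : {ω | P2 * (Z2 ω) ^ (-α) ≤ P1 * (Z1 ω) ^ (-α) ∧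
      P1 * (Z1 ω) ^ (-α) < B * P2 * (Z2 ω) ^ (-α)} =ᵐ[μ]
      (fun ω => (Z1 ω, Z2 ω)) ⁻¹' {p | c * p.1 ≤ p.2 ∧ p.2 < c' * p.1} := by
    rw [Filter.eventuallyEq_set]
    filter_upwards [ae_of_ae_map hm1.aemeasurable hν₁.ae_pos,
      ae_of_ae_map hm2.aemeasurable hν₂.ae_pos] with ω h1 h2
    exact offloaded_iff h1 h2 hP1 hP2.le (by positivity) hα0
  have hsq : ∀ x : ℝ, 0 ≤ x → (x ^ α⁻¹) ^ 2 = x ^ (2 / α) := fun x hx => by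
    rw [← rpow_natCast, ← rpow_mul hx, Nat.cast_ofNat, inv_mul_eq_div]
  have hS : MeasurableSet {p : ℝ × ℝ | c * p.1 ≤ p.2 ∧ p.2 < c' * p.1} := by
    measurability
  rw [measure_congr hevent, ← Measure.map_apply (hm1.prodMk hm2) hS,
    (indepFun_iff_map_prod_eq_prod_map_map hm1.aemeasurable hm2.aemeasurable).mp hindep,
    hν₁.prod_measure_mul_le_and_lt_mul (by positivity) hν₂ (by positivity) (by positivity) hcc',
    hsq _ (by positivity), hsq _ (by positivity)]
  congr 1
  field_simp
  ring
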